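/- The Lüders channel of the observable Z_t, i.e., ρ ↦ √(Z_t(+)) ρ √(Z_t(+)) + √(Z_t(−)) ρ √(Z_t(−)) with Z_t(±) = (1/2)(I ± t σ_3), equals the Pauli channel ρ ↦ p ρ + (1−p) σ_3 ρ σ_3 with p = (1/2)(√(1−t²) + 1). -/

import Mathlib

open Matrix Complex ComplexOrder

noncomputable def pauliZ : Matrix (Fin 2) (Fin 2) ℂ := !![1, 0; 0, -1]

/-- The effect `Z_t(ε) = (1/2)(I + ε t σ₃)`. -/
noncomputable def Zeff (t ε : ℝ) : Matrix (Fin 2) (Fin 2) ℂ :=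
  (1 / 2 : ℝ) • ((1 : Matrix (Fin 2) (Fin 2) ℂ) + (ε * t) • pauliZ)

theorem luders_of_Zt_is_phase_damping (t : ℝ) (ht0 : 0 ≤ t) (ht1 : t ≤ 1)
    (Sp Sm : Matrix (Fin 2) (Fin 2) ℂ)
    (hSp : Sp.PosSemidef) (hSp2 : Sp * Sp = Zeff t 1)
    (hSm : Sm.PosSemidef) (hSm2 : Sm * Sm = Zeff t (-1))
    (ρ : Matrix (Fin 2) (Fin 2) ℂ) :
    Sp * ρ * Sp + Sm * ρ * Sm
      = ((Real.sqrt (1 - t ^ 2) + 1) / 2) • ρ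
        + (1 - (Real.sqrt (1 - t ^ 2) + 1) / 2) • (pauliZ * ρ * pauliZ) := by
  set a : ℝ := Real.sqrt ((1 + t) / 2) with ha
  set b : ℝ := Real.sqrt ((1 - t) / 2) with hb
  have h1t : (0:ℝ) ≤ (1 + t) / 2 := by linarith
  have h2t : (0:ℝ) ≤ (1 - t) / 2 := by linarith
  have ha2 : (a:ℝ) ^ 2 = (1 + t) / 2 := Real.sq_sqrt h1t
  have hb2 : (b:ℝ) ^ 2 = (1 - t) / 2 := Real.sq_sqrt h2t
  have hDp : Matrix.PosSemidef (Matrix.diagonal ![(a:ℂ), (b:ℂ)]) := by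
    refine Matrix.posSemidef_diagonal_iff.mpr ?_
    intro i; fin_cases i <;>
      · simp; exact Real.sqrt_nonneg _
  have hDm : Matrix.PosSemidef (Matrix.diagonal ![(b:ℂ), (a:ℂ)]) := by
    refine Matrix.posSemidef_diagonal_iff.mpr ?_
    intro i; fin_cases i <;>
      · simp; exact Real.sqrt_nonneg _
  have hA : (a:ℂ)^2 = (1 + (t:ℂ))/2 := by exact_mod_cast ha2
  have hB : (b:ℂ)^2 = (1 - (t:ℂ))/2 := by exact_mod_cast hb2
  have hSpD : Sp = Matrix.diagonal ![(a:ℂ), (b:ℂ)] := by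
    refine (open scoped MatrixOrder Matrix.Norms.L2Operator in (CFC.sq_eq_sq_iff _ _ hSp.nonneg hDp.nonneg).mp ?_)
    rw [pow_two, pow_two, hSp2, Matrix.diagonal_mul_diagonal]
    ext i j
    fin_cases i <;> fin_cases j <;>
      simp [Zeff, pauliZ, Matrix.one_apply] <;>
      first
        | linear_combination hA | linear_combination -hA
        | linear_combination hB | linear_combination -hB
        | linear_combination hA + hB | linear_combination -hA - hB
        | linear_combination hA - hB | linear_combination hB - hA
  have hSmD : Sm = Matrix.diagonal ![(b:ℂ), (a:ℂ)] := by
    refine (open scoped MatrixOrder Matrix.Norms.L2Operator in (CFC.sq_eq_sq_iff _ _ hSm.nonneg hDm.nonneg).mp ?_)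
    rw [pow_two, pow_two, hSm2, Matrix.diagonal_mul_diagonal]
    ext i j
    fin_cases i <;> fin_cases j <;>
      simp [Zeff, pauliZ, Matrix.one_apply] <;>
      first
        | linear_combination hA | linear_combination -hA
        | linear_combination hB | linear_combination -hB
        | linear_combination hA + hB | linear_combination -hA - hB
        | linear_combination hA - hB | linear_combination hB - hA
  have hab : (a:ℝ) * b = Real.sqrt (1 - t ^ 2) / 2 := by
    rw [ha, hb, ← Real.sqrt_mul h1t]
    rw [show ((1+t)/2 * ((1-t)/2) : ℝ) = (1 - t^2) * (1/2)^2 by ring,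
      Real.sqrt_mul (by nlinarith), Real.sqrt_sq (by norm_num)]
    ring
  have h1c : (a:ℂ)^2 + (b:ℂ)^2 = 1 := by
    have : (a:ℝ)^2 + b^2 = 1 := by rw [ha2, hb2]; ring
    exact_mod_cast this
  have h2c : (a:ℂ) * b = (Real.sqrt (1 - t^2) : ℂ) / 2 := by exact_mod_cast hab
  subst hSpD hSmD
  ext i j
  fin_cases i <;> fin_cases j <;>
    simp [Matrix.mul_apply, Fin.sum_univ_two, pauliZ, Matrix.diagonal, Complex.real_smul, Matrix.vecMul, dotProduct]
  · linear_combination (ρ 0 0) * h1c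
  · linear_combination (ρ 0 1) * 2 * h2c
  · linear_combination (ρ 1 0) * 2 * h2c
  · linear_combination (ρ 1 1) * h1c
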